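/- arXiv:1612.04963 — 3 statements merged into one kernel-verified Lean document; each statement's English description precedes it below -/
import Mathlib

section
/- Let λ = (λ_y) be a continuous family of measures along f : X → Y and μ = (μ_z) a continuous family of measures along g : Y → Z, with y ↦ λ_y measurable and all measures s-finite. For z ∈ Z set ν_z := (μ_z).bind λ, i.e. ν_z(A) = ∫_Y λ_y(A) dμ_z(y). Then: (i) ν_z is concentrated on the fibre (g ∘ f)⁻¹(z), i.e. ν_z(X ∖ (g ∘ f)⁻¹(z)) = 0 for every z; (ii) for every continuous compactly supported φ : X → ℂ and every z ∈ Z, ∫_X φ dν_z = ∫_Y (∫_X φ dλ_y) dμ_z(y); (iii) each ν_z is finite on compact sets and the function z ↦ ∫_X φ dν_z is continuous and compactly supported on Z. In other words, (ν_z)_{z∈Z} is a continuous family of measures along g ∘ f. -/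
open MeasureTheory
open scoped ENNReal

/-- Splitting a complex integral into real and imaginary parts. -/
lemma complex_split_aux {α : Type*} [MeasurableSpace α] (μ : Measure α) (u v : α → ℝ)
    (hu : Integrable u μ) (hv : Integrable v μ) :
    ∫ a, (((u a : ℝ) : ℂ) + (v a) • Complex.I) ∂μ
      = ((∫ a, u a ∂μ : ℝ) : ℂ) + (∫ a, v a ∂μ) • Complex.I := by
  have h1 : Integrable (fun a => (u a) • (1:ℂ)) μ := hu.smul_const 1
  have h2 : Integrable (fun a => (v a) • Complex.I) μ := hv.smul_const Complex.I
  have e : (fun a => (((u a : ℝ) : ℂ) + (v a) • Complex.I))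
      = fun a => (u a) • (1:ℂ) + (v a) • Complex.I := by
    funext a; simp [Complex.real_smul]
  rw [e, integral_add h1 h2, integral_smul_const, integral_smul_const]
  simp [Complex.real_smul]

/-- Composition of continuous families of measures: the bind measures
`ν_z := (μ_z).bind λ` form a continuous family along `g ∘ f`. -/
theorem composition_of_continuous_families_of_measures
    {X Y Z : Type*}
    [TopologicalSpace X] [LocallyCompactSpace X] [T2Space X]
    [MeasurableSpace X] [BorelSpace X]
    [TopologicalSpace Y] [LocallyCompactSpace Y] [T2Space Y]
    [MeasurableSpace Y] [BorelSpace Y]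
    [TopologicalSpace Z] [LocallyCompactSpace Z] [T2Space Z]
    (f : X → Y) (g : Y → Z) (hf : Continuous f) (hg : Continuous g)
    (lam : Y → Measure X) (mu : Z → Measure Y)
    (hlam_meas : Measurable lam)
    (hlam_sfin : ∀ y, SFinite (lam y))
    (hmu_sfin : ∀ z, SFinite (mu z))
    (hlam_fin : ∀ y, ∀ K : Set X, IsCompact K → lam y K < ∞)
    (hlam_conc : ∀ y, lam y (f ⁻¹' {y})ᶜ = 0)
    (hlam_cont : ∀ φ : X → ℂ, Continuous φ → HasCompactSupport φ →
      Continuous (fun y => ∫ x, φ x ∂(lam y)) ∧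
      HasCompactSupport (fun y => ∫ x, φ x ∂(lam y)))
    (hmu_fin : ∀ z, ∀ K : Set Y, IsCompact K → mu z K < ∞)
    (hmu_conc : ∀ z, mu z (g ⁻¹' {z})ᶜ = 0)
    (hmu_cont : ∀ ψ : Y → ℂ, Continuous ψ → HasCompactSupport ψ →
      Continuous (fun z => ∫ y, ψ y ∂(mu z)) ∧
      HasCompactSupport (fun z => ∫ y, ψ y ∂(mu z))) :
    (∀ z, ((mu z).bind lam) ((g ∘ f) ⁻¹' {z})ᶜ = 0) ∧
    (∀ φ : X → ℂ, Continuous φ → HasCompactSupport φ → ∀ z,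
      ∫ x, φ x ∂((mu z).bind lam) = ∫ y, (∫ x, φ x ∂(lam y)) ∂(mu z)) ∧
    (∀ z, ∀ K : Set X, IsCompact K → ((mu z).bind lam) K < ∞) ∧
    (∀ φ : X → ℂ, Continuous φ → HasCompactSupport φ →
      Continuous (fun z => ∫ x, φ x ∂((mu z).bind lam)) ∧
      HasCompactSupport (fun z => ∫ x, φ x ∂((mu z).bind lam))) := by
  haveI hFlam : ∀ y, IsFiniteMeasureOnCompacts (lam y) :=
    fun y => ⟨fun {K} hK => hlam_fin y K hK⟩
  haveI hFmu : ∀ z, IsFiniteMeasureOnCompacts (mu z) :=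
    fun z => ⟨fun {K} hK => hmu_fin z K hK⟩
  -- the real-valued version of the continuity hypothesis for `lam`
  have hR : ∀ ψ : X → ℝ, Continuous ψ → HasCompactSupport ψ →
      Continuous (fun y => ∫ x, ψ x ∂(lam y)) ∧
      HasCompactSupport (fun y => ∫ x, ψ x ∂(lam y)) := by
    intro ψ hc hs
    have hcC : Continuous fun x => ((ψ x : ℝ) : ℂ) := Complex.continuous_ofReal.comp hc
    have hsC : HasCompactSupport fun x => ((ψ x : ℝ) : ℂ) :=
      hs.comp_left (g := Complex.ofReal) Complex.ofReal_zero
    obtain ⟨hc', hs'⟩ := hlam_cont _ hcC hsC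
    have key : (fun y => ∫ x, ((ψ x : ℝ) : ℂ) ∂(lam y))
        = fun y => ((∫ x, ψ x ∂(lam y) : ℝ) : ℂ) := by
      funext y; exact integral_ofReal
    rw [key] at hc' hs'
    constructor
    · have := Complex.continuous_re.comp hc'
      simpa [Function.comp_def] using this
    · have := hs'.comp_left (g := Complex.re) Complex.zero_re
      simpa [Function.comp_def] using this
  -- part (iii): finiteness on compacts
  have part3 : ∀ z, ∀ K : Set X, IsCompact K → ((mu z).bind lam) K < ∞ := by
    intro z K hK
    obtain ⟨φ, hφ1, _, hφs, hφb⟩ :=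
      exists_continuous_one_zero_of_isCompact hK isClosed_empty disjoint_bot_right
    have hφc : Continuous φ := φ.continuous
    have hφ0 : ∀ x, 0 ≤ φ x := fun x => (hφb x).1
    have hint : ∀ y, Integrable φ (lam y) :=
      fun y => hφc.integrable_of_hasCompactSupport hφs
    obtain ⟨hgc, hgs⟩ := hR φ hφc hφs
    have hgint : Integrable (fun y => ∫ x, φ x ∂(lam y)) (mu z) :=
      hgc.integrable_of_hasCompactSupport hgs
    have hKm : MeasurableSet K := hK.isClosed.measurableSet
    rw [Measure.bind_apply hKm hlam_meas.aemeasurable]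
    calc ∫⁻ y, lam y K ∂(mu z)
        ≤ ∫⁻ y, ENNReal.ofReal (∫ x, φ x ∂(lam y)) ∂(mu z) := by
          refine lintegral_mono fun y => ?_
          rw [← lintegral_indicator_one hKm,
            ofReal_integral_eq_lintegral_ofReal (hint y) (Filter.Eventually.of_forall hφ0)]
          refine lintegral_mono fun x => ?_
          by_cases hx : x ∈ K
          · simp [hx, ENNReal.one_le_ofReal.2 (le_of_eq (hφ1 hx).symm)]
          · simp [hx]
      _ = ENNReal.ofReal (∫ y, (∫ x, φ x ∂(lam y)) ∂(mu z)) :=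
          (ofReal_integral_eq_lintegral_ofReal hgint
            (Filter.Eventually.of_forall fun y => integral_nonneg hφ0)).symm
      _ < ∞ := ENNReal.ofReal_lt_top
  haveI hFbind : ∀ z, IsFiniteMeasureOnCompacts ((mu z).bind lam) :=
    fun z => ⟨fun {K} hK => part3 z K hK⟩
  -- part (ii) for nonnegative real functions
  have part2N : ∀ ψ : X → ℝ, Continuous ψ → HasCompactSupport ψ → (∀ x, 0 ≤ ψ x) → ∀ z,
      ∫ x, ψ x ∂((mu z).bind lam) = ∫ y, (∫ x, ψ x ∂(lam y)) ∂(mu z) := by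
    intro ψ hc hs hpos z
    have hinty : ∀ y, Integrable ψ (lam y) :=
      fun y => hc.integrable_of_hasCompactSupport hs
    obtain ⟨hgc, hgs⟩ := hR ψ hc hs
    have hgint : Integrable (fun y => ∫ x, ψ x ∂(lam y)) (mu z) :=
      hgc.integrable_of_hasCompactSupport hgs
    have hgpos : ∀ y, 0 ≤ ∫ x, ψ x ∂(lam y) := fun y => integral_nonneg hpos
    rw [integral_eq_lintegral_of_nonneg_ae (Filter.Eventually.of_forall hpos)
        hc.aestronglyMeasurable,
      integral_eq_lintegral_of_nonneg_ae (Filter.Eventually.of_forall hgpos)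
        hgc.aestronglyMeasurable,
      Measure.lintegral_bind hlam_meas.aemeasurable (hc.measurable.ennreal_ofReal.aemeasurable)]
    congr 1
    refine lintegral_congr fun y => ?_
    exact (ofReal_integral_eq_lintegral_ofReal (hinty y)
      (Filter.Eventually.of_forall hpos)).symm
  -- part (ii) for real functions
  have part2R : ∀ ψ : X → ℝ, Continuous ψ → HasCompactSupport ψ → ∀ z,
      ∫ x, ψ x ∂((mu z).bind lam) = ∫ y, (∫ x, ψ x ∂(lam y)) ∂(mu z) := by
    intro ψ hc hs z
    set ψp : X → ℝ := fun x => max (ψ x) 0 with hψp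
    set ψm : X → ℝ := fun x => max (-ψ x) 0 with hψm
    have hpc : Continuous ψp := hc.max continuous_const
    have hmc : Continuous ψm := hc.neg.max continuous_const
    have hps : HasCompactSupport ψp :=
      hs.comp_left (g := fun t => max t 0) (by simp)
    have hms : HasCompactSupport ψm :=
      hs.comp_left (g := fun t => max (-t) 0) (by simp)
    have hppos : ∀ x, 0 ≤ ψp x := fun x => le_max_right _ _
    have hmpos : ∀ x, 0 ≤ ψm x := fun x => le_max_right _ _
    have hsub : ∀ x, ψ x = ψp x - ψm x := fun x => (max_zero_sub_eq_self (ψ x)).symm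
    have hbp : Integrable ψp ((mu z).bind lam) := hpc.integrable_of_hasCompactSupport hps
    have hbm : Integrable ψm ((mu z).bind lam) := hmc.integrable_of_hasCompactSupport hms
    obtain ⟨hgpc, hgps⟩ := hR ψp hpc hps
    obtain ⟨hgmc, hgms⟩ := hR ψm hmc hms
    have hgip : Integrable (fun y => ∫ x, ψp x ∂(lam y)) (mu z) :=
      hgpc.integrable_of_hasCompactSupport hgps
    have hgim : Integrable (fun y => ∫ x, ψm x ∂(lam y)) (mu z) :=
      hgmc.integrable_of_hasCompactSupport hgms
    have hyp : ∀ y, Integrable ψp (lam y) :=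
      fun y => hpc.integrable_of_hasCompactSupport hps
    have hym : ∀ y, Integrable ψm (lam y) :=
      fun y => hmc.integrable_of_hasCompactSupport hms
    calc ∫ x, ψ x ∂((mu z).bind lam)
        = ∫ x, (ψp x - ψm x) ∂((mu z).bind lam) := by
          refine integral_congr_ae (Filter.Eventually.of_forall fun x => hsub x)
      _ = (∫ x, ψp x ∂((mu z).bind lam)) - ∫ x, ψm x ∂((mu z).bind lam) :=
          integral_sub hbp hbm
      _ = (∫ y, (∫ x, ψp x ∂(lam y)) ∂(mu z)) - ∫ y, (∫ x, ψm x ∂(lam y)) ∂(mu z) := by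
          rw [part2N ψp hpc hps hppos z, part2N ψm hmc hms hmpos z]
      _ = ∫ y, ((∫ x, ψp x ∂(lam y)) - ∫ x, ψm x ∂(lam y)) ∂(mu z) :=
          (integral_sub hgip hgim).symm
      _ = ∫ y, (∫ x, ψ x ∂(lam y)) ∂(mu z) := by
          refine integral_congr_ae (Filter.Eventually.of_forall fun y => ?_)
          show (∫ x, ψp x ∂(lam y)) - (∫ x, ψm x ∂(lam y)) = ∫ x, ψ x ∂(lam y)
          rw [← integral_sub (hyp y) (hym y)]
          exact integral_congr_ae (Filter.Eventually.of_forall fun x => (hsub x).symm)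
  -- part (ii)
  have part2 : ∀ φ : X → ℂ, Continuous φ → HasCompactSupport φ → ∀ z,
      ∫ x, φ x ∂((mu z).bind lam) = ∫ y, (∫ x, φ x ∂(lam y)) ∂(mu z) := by
    intro φ hc hs z
    set φr : X → ℝ := fun x => (φ x).re with hφr
    set φi : X → ℝ := fun x => (φ x).im with hφi
    have hrc : Continuous φr := Complex.continuous_re.comp hc
    have hic : Continuous φi := Complex.continuous_im.comp hc
    have hrs : HasCompactSupport φr := hs.comp_left (g := Complex.re) Complex.zero_re
    have his : HasCompactSupport φi := hs.comp_left (g := Complex.im) Complex.zero_im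
    have hdecomp : ∀ (ρ : Measure X), φ = fun x => ((φr x : ℝ) : ℂ) + (φi x) • Complex.I := by
      intro _; funext x
      simp [hφr, hφi, Complex.real_smul, Complex.re_add_im]
    obtain ⟨hgrc, hgrs⟩ := hR φr hrc hrs
    obtain ⟨hgic, hgis⟩ := hR φi hic his
    have hgri : Integrable (fun y => ∫ x, φr x ∂(lam y)) (mu z) :=
      hgrc.integrable_of_hasCompactSupport hgrs
    have hgii : Integrable (fun y => ∫ x, φi x ∂(lam y)) (mu z) :=
      hgic.integrable_of_hasCompactSupport hgis
    have hbr : Integrable φr ((mu z).bind lam) := hrc.integrable_of_hasCompactSupport hrs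
    have hbi : Integrable φi ((mu z).bind lam) := hic.integrable_of_hasCompactSupport his
    have hyr : ∀ y, Integrable φr (lam y) :=
      fun y => hrc.integrable_of_hasCompactSupport hrs
    have hyi : ∀ y, Integrable φi (lam y) :=
      fun y => hic.integrable_of_hasCompactSupport his
    have hLHS : ∫ x, φ x ∂((mu z).bind lam)
        = ((∫ x, φr x ∂((mu z).bind lam) : ℝ) : ℂ)
          + (∫ x, φi x ∂((mu z).bind lam)) • Complex.I := by
      conv_lhs => rw [hdecomp ((mu z).bind lam)]
      exact complex_split_aux _ φr φi hbr hbi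
    have hInner : ∀ y, ∫ x, φ x ∂(lam y)
        = ((∫ x, φr x ∂(lam y) : ℝ) : ℂ) + (∫ x, φi x ∂(lam y)) • Complex.I := by
      intro y
      conv_lhs => rw [hdecomp (lam y)]
      exact complex_split_aux _ φr φi (hyr y) (hyi y)
    have hRHS : ∫ y, (∫ x, φ x ∂(lam y)) ∂(mu z)
        = ((∫ y, (∫ x, φr x ∂(lam y)) ∂(mu z) : ℝ) : ℂ)
          + (∫ y, (∫ x, φi x ∂(lam y)) ∂(mu z)) • Complex.I := by
      have : (fun y => ∫ x, φ x ∂(lam y))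
          = fun y => ((∫ x, φr x ∂(lam y) : ℝ) : ℂ)
            + (∫ x, φi x ∂(lam y)) • Complex.I := funext hInner
      rw [this]
      exact complex_split_aux _ _ _ hgri hgii
    rw [hLHS, hRHS, part2R φr hrc hrs z, part2R φi hic his z]
  refine ⟨?_, part2, part3, ?_⟩
  · -- part (i): concentration on fibres
    intro z
    have hclosed : IsClosed ((g ∘ f) ⁻¹' {z}) := isClosed_singleton.preimage (hg.comp hf)
    have hSm : MeasurableSet (((g ∘ f) ⁻¹' {z})ᶜ) := hclosed.measurableSet.compl
    rw [Measure.bind_apply hSm hlam_meas.aemeasurable]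
    have hae : ∀ᵐ y ∂(mu z), g y = z := by
      rw [ae_iff]
      have e : {y | ¬ g y = z} = (g ⁻¹' {z})ᶜ := by
        ext y; simp [Set.mem_preimage]
      rw [e]
      exact hmu_conc z
    have h0 : ∀ᵐ y ∂(mu z), lam y (((g ∘ f) ⁻¹' {z})ᶜ) = 0 := by
      filter_upwards [hae] with y hy
      have hsub : (f ⁻¹' {y}) ⊆ (g ∘ f) ⁻¹' {z} := by
        intro x hx
        simp only [Set.mem_preimage, Set.mem_singleton_iff] at hx ⊢
        simp [Function.comp, hx, hy]
      exact measure_mono_null (Set.compl_subset_compl.mpr hsub) (hlam_conc y)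
    calc ∫⁻ y, lam y (((g ∘ f) ⁻¹' {z})ᶜ) ∂(mu z)
        = ∫⁻ _, (0 : ℝ≥0∞) ∂(mu z) := lintegral_congr_ae h0
      _ = 0 := lintegral_zero
  · -- part (iv): continuity and compact support
    intro φ hc hs
    have heq : (fun z => ∫ x, φ x ∂((mu z).bind lam))
        = fun z => ∫ y, (∫ x, φ x ∂(lam y)) ∂(mu z) :=
      funext fun z => part2 φ hc hs z
    rw [heq]
    obtain ⟨h1, h2⟩ := hlam_cont φ hc hs
    exact hmu_cont _ h1 h2
end

section
/- Let ν := μ.inv. For f, ξ : G → ℂ continuous with compact support, define the convolution (f ⋆ ξ)(h) := ∫_G f(g) · ξ(g⁻¹h) dμ(g). Then ( ∫_G |(f ⋆ ξ)(h)|² dν(h) )^{1/2} ≤ ( ∫_G |f(g)| dμ(g) )^{1/2} · ( ∫_G |f(g)| dν(g) )^{1/2} · ( ∫_G |ξ(h)|² dν(h) )^{1/2}. In particular the operator of left convolution by f on L²(G, ν) has norm at most ‖f‖_{L¹(μ)}^{1/2} · ‖f‖_{L¹(ν)}^{1/2}, hence at most the I-norm max(‖f‖_{L¹(μ)}, ‖f‖_{L¹(ν)}).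 (This is Lemma 4.2 of the paper specialised to a group.) -/
open MeasureTheory
open scoped ENNReal

open scoped Pointwise

theorem my_integral_inv {G : Type*} [Group G] [MeasurableSpace G] [MeasurableInv G]
    {E : Type*} [NormedAddCommGroup E] [NormedSpace ℝ E]
    (μ : Measure G) (φ : G → E) : ∫ x, φ x ∂μ.inv = ∫ x, φ x⁻¹ ∂μ := by
  have h : MeasurableEmbedding fun x : G => x⁻¹ := (MeasurableEquiv.inv G).measurableEmbedding
  rw [Measure.inv_def]
  exact h.integral_map φ


/-- Lemma 4.2 of the paper specialised to a group: the `I`-norm bound for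
the left convolution operator on `L²(G, ν)` with `ν := μ.inv`. -/
theorem convolution_I_norm_bound
    {G : Type*} [TopologicalSpace G] [LocallyCompactSpace G] [T2Space G]
    [Group G] [IsTopologicalGroup G] [MeasurableSpace G] [BorelSpace G]
    (μ : Measure G) [μ.IsHaarMeasure] [μ.Regular]
    (f ξ : G → ℂ) (hf : Continuous f) (hfc : HasCompactSupport f)
    (hξ : Continuous ξ) (hξc : HasCompactSupport ξ) :
    (∫ h, ‖∫ g, f g * ξ (g⁻¹ * h) ∂μ‖ ^ 2 ∂μ.inv) ^ (1/2 : ℝ)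
      ≤ (∫ g, ‖f g‖ ∂μ) ^ (1/2 : ℝ) * (∫ g, ‖f g‖ ∂μ.inv) ^ (1/2 : ℝ)
          * (∫ h, ‖ξ h‖ ^ 2 ∂μ.inv) ^ (1/2 : ℝ) ∧
    (∫ g, ‖f g‖ ∂μ) ^ (1/2 : ℝ) * (∫ g, ‖f g‖ ∂μ.inv) ^ (1/2 : ℝ)
      ≤ max (∫ g, ‖f g‖ ∂μ) (∫ g, ‖f g‖ ∂μ.inv) := by
  set ν := μ.inv with hν
  set K := tsupport f with hK
  set S := tsupport ξ with hS
  set L := K * S with hL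
  have hKc : IsCompact K := hfc
  have hSc : IsCompact S := hξc
  have hLc : IsCompact L := hKc.mul hSc
  set A := ∫ g, ‖f g‖ ∂μ with hA
  set B := ∫ g, ‖f g‖ ∂ν with hB
  set F : G → G → ℝ := fun h u => ‖ξ u‖ ^ 2 * ‖f (h * u⁻¹)‖ with hF
  have hFcont : Continuous (Function.uncurry F) := by fun_prop
  have hFsupp : HasCompactSupport (Function.uncurry F) := by
    apply HasCompactSupport.intro (hLc.prod hSc)
    rintro ⟨h, u⟩ hp
    have hor : ξ u = 0 ∨ f (h * u⁻¹) = 0 := by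
      by_contra hc
      push_neg at hc
      exact hp ⟨⟨h * u⁻¹, subset_tsupport f hc.2, u, subset_tsupport ξ hc.1, by group⟩,
        subset_tsupport ξ hc.1⟩
    rcases hor with h0 | h0 <;> simp [Function.uncurry, hF, h0]
  -- step 2: change of variables
  have step2 : ∀ h : G, (∫ g, ‖f g‖ * ‖ξ (g⁻¹ * h)‖ ^ 2 ∂μ) = ∫ u, F h u ∂ν := by
    intro h
    have e1 : (∫ g, ‖f g‖ * ‖ξ (g⁻¹ * h)‖ ^ 2 ∂μ)
        = ∫ u, ‖f u⁻¹‖ * ‖ξ (u⁻¹⁻¹ * h)‖ ^ 2 ∂ν := by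
      conv_lhs => rw [← μ.inv_inv]
      exact my_integral_inv μ.inv _
    rw [e1]
    have e2 : (fun u => ‖f u⁻¹‖ * ‖ξ (u⁻¹⁻¹ * h)‖ ^ 2) = fun u => F h (u * h) := by
      funext u
      simp only [hF, mul_inv_rev, inv_inv, mul_inv_cancel_left]
      ring
    rw [e2, integral_mul_right_eq_self (F h) h]
  have hAnn : 0 ≤ A := integral_nonneg fun _ => norm_nonneg _
  -- step 1: pointwise Cauchy-Schwarz
  have step1 : ∀ h : G, ‖∫ g, f g * ξ (g⁻¹ * h) ∂μ‖ ^ 2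
      ≤ A * ∫ g, ‖f g‖ * ‖ξ (g⁻¹ * h)‖ ^ 2 ∂μ := by
    intro h
    set a : G → ℝ := fun g => Real.sqrt ‖f g‖ with ha
    set b : G → ℝ := fun g => Real.sqrt ‖f g‖ * ‖ξ (g⁻¹ * h)‖ with hb
    have hacont : Continuous a := Real.continuous_sqrt.comp hf.norm
    have hacs : HasCompactSupport a :=
      hfc.comp_left (g := fun v : ℂ => Real.sqrt ‖v‖) (by simp)
    have hbcont : Continuous b := by fun_prop
    have hbcs : HasCompactSupport b := hacs.mul_right
    have hpq : Real.HolderConjugate 2 2 := ⟨by norm_num, by norm_num, by norm_num⟩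
    have hCS := integral_mul_le_Lp_mul_Lq_of_nonneg (μ := μ) hpq
      (Filter.Eventually.of_forall fun g => Real.sqrt_nonneg _)
      (Filter.Eventually.of_forall fun g => mul_nonneg (Real.sqrt_nonneg _) (norm_nonneg _))
      (hacont.memLp_of_hasCompactSupport hacs)
      (hbcont.memLp_of_hasCompactSupport hbcs)
    have hsq : ∀ x : ℝ, x ^ (2:ℝ) = x * x := fun x => by
      rw [show (2:ℝ) = ((2:ℕ):ℝ) by norm_num, Real.rpow_natCast]; ring
    have ea : (∫ g, a g ^ (2:ℝ) ∂μ) = A := by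
      rw [hA]; congr 1; funext g
      rw [hsq, ha, Real.mul_self_sqrt (norm_nonneg _)]
    have eb : (∫ g, b g ^ (2:ℝ) ∂μ) = ∫ g, ‖f g‖ * ‖ξ (g⁻¹ * h)‖ ^ 2 ∂μ := by
      congr 1; funext g
      rw [hsq, hb]
      have := Real.mul_self_sqrt (norm_nonneg (f g))
      nlinarith [this]
    have hnorm : ‖∫ g, f g * ξ (g⁻¹ * h) ∂μ‖ ≤ ∫ g, a g * b g ∂μ := by
      refine (norm_integral_le_integral_norm _).trans (le_of_eq ?_)
      congr 1; funext g
      rw [norm_mul, ha, hb, ← mul_assoc, Real.mul_self_sqrt (norm_nonneg _)]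
    have hWnn : 0 ≤ ∫ g, ‖f g‖ * ‖ξ (g⁻¹ * h)‖ ^ 2 ∂μ :=
      integral_nonneg fun g => mul_nonneg (norm_nonneg _) (by positivity)
    calc ‖∫ g, f g * ξ (g⁻¹ * h) ∂μ‖ ^ 2
        ≤ (A ^ (1/2:ℝ) * (∫ g, ‖f g‖ * ‖ξ (g⁻¹ * h)‖ ^ 2 ∂μ) ^ (1/2:ℝ)) ^ 2 := by
          apply pow_le_pow_left₀ (norm_nonneg _)
          exact hnorm.trans (by rw [← ea, ← eb]; exact hCS)
      _ = A * ∫ g, ‖f g‖ * ‖ξ (g⁻¹ * h)‖ ^ 2 ∂μ := by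
          rw [mul_pow, ← Real.rpow_natCast (A ^ (1/2:ℝ)) 2, ← Real.rpow_natCast (_ ^ (1/2:ℝ)) 2,
            ← Real.rpow_mul hAnn, ← Real.rpow_mul hWnn]
          norm_num
  set C := ∫ h, ‖ξ h‖ ^ 2 ∂ν with hC
  have hCnn : 0 ≤ C := integral_nonneg fun _ => by positivity
  have hBnn : 0 ≤ B := integral_nonneg fun _ => norm_nonneg _
  -- V and its properties
  haveI : Fact (ν S < ∞) := ⟨hSc.measure_lt_top⟩
  haveI : Fact (ν L < ∞) := ⟨hLc.measure_lt_top⟩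
  set V : G → ℝ := fun h => ∫ u, F h u ∂(ν.restrict S) with hV
  have hVeq : ∀ h, V h = ∫ u, F h u ∂ν := fun h =>
    setIntegral_eq_integral_of_forall_compl_eq_zero fun u hu => by
      have : ξ u = 0 := image_eq_zero_of_notMem_tsupport hu
      simp [hF, this]
  have hVm : StronglyMeasurable V :=
    (hFsupp.stronglyMeasurable_of_prod hFcont).integral_prod_right'
  have hVnn : ∀ h, 0 ≤ V h := fun h => integral_nonneg fun u => by
    simp only [hF]; positivity
  obtain ⟨Mf, hMf⟩ := hf.norm.bounded_above_of_compact_support hfc.norm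
  obtain ⟨Mx, hMx⟩ := hξ.norm.bounded_above_of_compact_support hξc.norm
  have hVle : ∀ h, V h ≤ Mx ^ 2 * Mf * (ν S).toReal := by
    intro h
    have : V h ≤ ∫ _u, Mx ^ 2 * Mf ∂(ν.restrict S) := by
      refine integral_mono_of_nonneg (Filter.Eventually.of_forall fun u => by
        simp only [hF]; positivity) (integrable_const _)
        (Filter.Eventually.of_forall fun u => ?_)
      simp only [hF]
      have h1 := hMx u; have h2 := hMf (h * u⁻¹)
      have h3 : (0:ℝ) ≤ ‖ξ u‖ := by positivity
      have h4 : (0:ℝ) ≤ ‖f (h * u⁻¹)‖ := by positivity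
      simp only [norm_norm] at h1 h2
      have h5 : 0 ≤ Mx := h3.trans h1
      have h6 : ‖ξ u‖ ^ 2 ≤ Mx ^ 2 := by nlinarith
      nlinarith [mul_le_mul h6 h2 h4 (by positivity : (0:ℝ) ≤ Mx ^ 2)]
    refine this.trans (le_of_eq ?_)
    rw [integral_const, measureReal_def, Measure.restrict_apply_univ, smul_eq_mul, mul_comm]
  have hVint : Integrable V (ν.restrict L) := by
    refine Integrable.mono' (integrable_const (Mx ^ 2 * Mf * (ν S).toReal))
      hVm.aestronglyMeasurable (Filter.Eventually.of_forall fun h => ?_)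
    rw [Real.norm_eq_abs, abs_of_nonneg (hVnn h)]
    exact hVle h
  -- main chain
  have hvanish : ∀ h ∉ L, ‖∫ g, f g * ξ (g⁻¹ * h) ∂μ‖ ^ 2 = 0 := by
    intro h hh
    have : (fun g => f g * ξ (g⁻¹ * h)) = fun _ => (0:ℂ) := by
      funext g
      rcases eq_or_ne (f g) 0 with h0 | h0
      · simp [h0]
      rcases eq_or_ne (ξ (g⁻¹ * h)) 0 with h1 | h1
      · simp [h1]
      exact absurd ⟨g, subset_tsupport f h0, g⁻¹ * h, subset_tsupport ξ h1, by group⟩ hh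
    rw [this, integral_zero]
    simp
  have hVvanish : ∀ h ∉ L, V h = 0 := by
    intro h hh
    have : ∀ u, F h u = 0 := by
      intro u
      rcases eq_or_ne (ξ u) 0 with h0 | h0
      · simp [hF, h0]
      rcases eq_or_ne (f (h * u⁻¹)) 0 with h1 | h1
      · simp [hF, h1]
      exact absurd ⟨h * u⁻¹, subset_tsupport f h1, u, subset_tsupport ξ h0, by group⟩ hh
    simp only [hV, this, integral_zero]
  have key : (∫ h, ‖∫ g, f g * ξ (g⁻¹ * h) ∂μ‖ ^ 2 ∂ν) ≤ A * (C * B) := by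
    calc (∫ h, ‖∫ g, f g * ξ (g⁻¹ * h) ∂μ‖ ^ 2 ∂ν)
        = ∫ h in L, ‖∫ g, f g * ξ (g⁻¹ * h) ∂μ‖ ^ 2 ∂ν :=
          (setIntegral_eq_integral_of_forall_compl_eq_zero hvanish).symm
      _ ≤ ∫ h in L, A * V h ∂ν := by
          refine integral_mono_of_nonneg (Filter.Eventually.of_forall fun h => by positivity)
            (hVint.const_mul A) (Filter.Eventually.of_forall fun h => ?_)
          refine (step1 h).trans (le_of_eq ?_)
          show A * (∫ g, ‖f g‖ * ‖ξ (g⁻¹ * h)‖ ^ 2 ∂μ) = A * V h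
          rw [step2 h, hVeq h]
      _ = A * ∫ h in L, V h ∂ν := integral_const_mul A V
      _ = A * ∫ h, V h ∂ν := by
          rw [setIntegral_eq_integral_of_forall_compl_eq_zero hVvanish]
      _ = A * ∫ h, (∫ u, F h u ∂ν) ∂ν := by
          congr 1; exact integral_congr_ae (Filter.Eventually.of_forall hVeq)
      _ = A * ∫ u, (∫ h, F h u ∂ν) ∂ν := by
          congr 1
          exact integral_integral_swap_of_hasCompactSupport hFcont hFsupp
      _ = A * ∫ u, ‖ξ u‖ ^ 2 * B ∂ν := by
          congr 1
          refine integral_congr_ae (Filter.Eventually.of_forall fun u => ?_)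
          simp only [hF]
          rw [integral_const_mul, integral_mul_right_eq_self (fun x => ‖f x‖) u⁻¹]
      _ = A * (C * B) := by rw [integral_mul_const]
  have hTnn : 0 ≤ ∫ h, ‖∫ g, f g * ξ (g⁻¹ * h) ∂μ‖ ^ 2 ∂ν :=
    integral_nonneg fun h => by positivity
  constructor
  · calc (∫ h, ‖∫ g, f g * ξ (g⁻¹ * h) ∂μ‖ ^ 2 ∂ν) ^ (1/2:ℝ)
        ≤ (A * (C * B)) ^ (1/2:ℝ) := Real.rpow_le_rpow hTnn key (by norm_num)
      _ = A ^ (1/2:ℝ) * B ^ (1/2:ℝ) * C ^ (1/2:ℝ) := by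
          rw [Real.mul_rpow hAnn (mul_nonneg hCnn hBnn), Real.mul_rpow hCnn hBnn]
          ring
  · have hM : 0 ≤ max A B := le_trans hAnn (le_max_left _ _)
    calc A ^ (1/2:ℝ) * B ^ (1/2:ℝ)
        ≤ (max A B) ^ (1/2:ℝ) * (max A B) ^ (1/2:ℝ) :=
          mul_le_mul (Real.rpow_le_rpow hAnn (le_max_left _ _) (by norm_num))
            (Real.rpow_le_rpow hBnn (le_max_right _ _) (by norm_num))
            (Real.rpow_nonneg hBnn _) (Real.rpow_nonneg hM _)
      _ = max A B := by
          rw [← Real.rpow_add' hM (by norm_num)]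
          norm_num
end

section
/- Let φ : C₀(X, ℂ) → B(H) be a *-algebra homomorphism. For open U, V ⊆ X one has H_U ∩ H_V = H_{U ∩ V}, where for an open set W ⊆ X, H_W denotes the closure of the linear span of {φ(f)ξ : f ∈ C₀(X, ℂ) with f(x) = 0 for all x ∉ W, ξ ∈ H}. (This is the identity H_e ∩ H_f = H_{ef} established in the proof of Proposition 6.2 of the paper.) -/
open scoped ZeroAtInfty

variable {X : Type*} [TopologicalSpace X] [LocallyCompactSpace X] [T2Space X]
variable {H : Type*} [NormedAddCommGroup H] [InnerProductSpace ℂ H] [CompleteSpace H]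

/-- For an open `W ⊆ X`, the closed subspace `H_W` generated by `φ(f)ξ` with
`f ∈ C₀(X)` vanishing outside `W`. -/
def Hsub (φ : C₀(X, ℂ) →⋆ₙₐ[ℂ] (H →L[ℂ] H)) (W : Set X) : Set H :=
  closure (Submodule.span ℂ
    {v : H | ∃ (f : C₀(X, ℂ)) (ξ : H), (∀ x ∉ W, f x = 0) ∧ v = φ f ξ} : Set H)

/-- Norm bound for `C₀` functions from a pointwise bound. -/
lemma C0_norm_le {f : C₀(X, ℂ)} {C : ℝ} (hC : 0 ≤ C) (h : ∀ x, ‖f x‖ ≤ C) : ‖f‖ ≤ C := by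
  rw [← ZeroAtInftyContinuousMap.norm_toBCF_eq_norm]
  exact (BoundedContinuousFunction.norm_le hC).mpr h

/-- `φ` is norm-contractive and hence `‖φ g ξ‖ ≤ ‖g‖ * ‖ξ‖`. -/
lemma phi_apply_norm_le (φ : C₀(X, ℂ) →⋆ₙₐ[ℂ] (H →L[ℂ] H)) (g : C₀(X, ℂ)) (v : H) :
    ‖φ g v‖ ≤ ‖g‖ * ‖v‖ :=
  ((φ g).le_opNorm v).trans
    (mul_le_mul_of_nonneg_right (NonUnitalStarAlgHom.norm_apply_le φ g) (norm_nonneg v))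

/-- The predicate: `g` vanishes outside `W` and takes real values in `[0,1]`. -/
def Good (W : Set X) (g : C₀(X, ℂ)) : Prop :=
  (∀ x ∉ W, g x = 0) ∧ ∀ x, ∃ r : ℝ, r ∈ Set.Icc (0 : ℝ) 1 ∧ g x = r

lemma Good.norm_le_one {W : Set X} {g : C₀(X, ℂ)} (hg : Good W g) : ‖g‖ ≤ 1 := by
  refine C0_norm_le zero_le_one fun x => ?_
  obtain ⟨r, hr, hgx⟩ := hg.2 x
  rw [hgx]
  simpa [abs_of_nonneg hr.1] using hr.2

/-- Approximate identity on elements of the span. -/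
lemma span_approx (φ : C₀(X, ℂ) →⋆ₙₐ[ℂ] (H →L[ℂ] H)) {W : Set X} (hW : IsOpen W)
    {w : H}
    (hw : w ∈ Submodule.span ℂ
      {v : H | ∃ (f : C₀(X, ℂ)) (ξ : H), (∀ x ∉ W, f x = 0) ∧ v = φ f ξ}) :
    ∀ δ > (0 : ℝ), ∃ g : C₀(X, ℂ), Good W g ∧ ‖φ g w - w‖ < δ := by
  induction hw using Submodule.span_induction with
  | mem v hv =>
    obtain ⟨f, ξ, hf, rfl⟩ := hv
    intro δ hδ
    set δ' : ℝ := δ / (‖ξ‖ + 1) with hδ'def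
    have hξpos : (0 : ℝ) < ‖ξ‖ + 1 := by positivity
    have hδ'pos : 0 < δ' := div_pos hδ hξpos
    -- the compact set where `‖f‖ ≥ δ'`
    set S : Set X := {x | δ' ≤ ‖f x‖} with hSdef
    have hScl : IsClosed S := by
      have : Continuous fun x => ‖f x‖ := f.continuous.norm
      exact isClosed_le continuous_const this
    have hScomp : IsCompact S := by
      have h0 : Filter.Tendsto f (Filter.cocompact X) (nhds 0) := f.zero_at_infty'
      have hmem : f ⁻¹' Metric.ball 0 δ' ∈ Filter.cocompact X :=
        h0 (Metric.ball_mem_nhds (0 : ℂ) hδ'pos)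
      obtain ⟨K, hK, hKsub⟩ := Filter.mem_cocompact.mp hmem
      refine hK.of_isClosed_subset hScl fun x hx => ?_
      by_contra hxK
      have h1 : ‖f x‖ < δ' := by
        simpa [Metric.mem_ball, dist_zero_right] using hKsub hxK
      have h2 : δ' ≤ ‖f x‖ := hx
      linarith
    have hSW : S ⊆ W := fun x hx => by
      by_contra hxW
      have := hf x hxW
      have : ‖f x‖ = 0 := by simp [this]
      have h2 : δ' ≤ ‖f x‖ := hx
      linarith
    -- Urysohn
    obtain ⟨g₀, hg₀S, hg₀W, hg₀supp, hg₀01⟩ :=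
      exists_continuous_one_zero_of_isCompact hScomp hW.isClosed_compl
        (Set.disjoint_left.mpr fun x hx hx' => hx' (hSW hx))
    set g : C₀(X, ℂ) :=
      { toFun := fun x => (g₀ x : ℂ)
        continuous_toFun := Complex.continuous_ofReal.comp g₀.continuous
        zero_at_infty' := by
          refine tendsto_const_nhds.congr' ?_
          filter_upwards [Filter.mem_cocompact.mpr ⟨tsupport g₀, hg₀supp, subset_rfl⟩] with x hx
          simp [image_eq_zero_of_notMem_tsupport hx] } with hgdef
    have hgood : Good W g := by
      constructor
      · intro x hx
        have : g₀ x = 0 := hg₀W (by simpa using hx)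
        simp [hgdef, this]
      · intro x
        exact ⟨g₀ x, hg₀01 x, rfl⟩
    refine ⟨g, hgood, ?_⟩
    have hgf : ‖g * f - f‖ ≤ δ' := by
      refine C0_norm_le hδ'pos.le fun x => ?_
      have hx : (g * f - f) x = ((g₀ x : ℂ) - 1) * f x := by
        simp [hgdef]
        ring
      rw [hx, norm_mul]
      by_cases hxS : x ∈ S
      · have : g₀ x = 1 := hg₀S hxS
        simp [this, hδ'pos.le]
      · have h1 : ‖f x‖ < δ' := lt_of_not_ge (by simpa [hSdef] using hxS)
        have h2 : ‖(g₀ x : ℂ) - 1‖ ≤ 1 := by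
          have h01 := hg₀01 x
          rw [show ((g₀ x : ℂ) - 1) = ((g₀ x - 1 : ℝ) : ℂ) by push_cast; ring]
          rw [Complex.norm_real, Real.norm_eq_abs, abs_le]
          constructor <;> · obtain ⟨a, b⟩ := h01; linarith
        calc ‖(g₀ x : ℂ) - 1‖ * ‖f x‖ ≤ 1 * ‖f x‖ :=
              mul_le_mul_of_nonneg_right h2 (norm_nonneg _)
          _ ≤ δ' := by rw [one_mul]; exact h1.le
    have key : φ g (φ f ξ) - φ f ξ = φ (g * f - f) ξ := by
      simp [map_sub, map_mul, ContinuousLinearMap.sub_apply, ContinuousLinearMap.mul_apply]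
    rw [key]
    calc ‖φ (g * f - f) ξ‖ ≤ ‖g * f - f‖ * ‖ξ‖ := phi_apply_norm_le φ _ _
      _ ≤ δ' * ‖ξ‖ := mul_le_mul_of_nonneg_right hgf (norm_nonneg _)
      _ < δ := by
          rw [hδ'def, div_mul_eq_mul_div, div_lt_iff₀ hξpos]
          have : ‖ξ‖ < ‖ξ‖ + 1 := by linarith
          calc δ * ‖ξ‖ ≤ δ * ‖ξ‖ := le_rfl
            _ < δ * (‖ξ‖ + 1) := by nlinarith
  | zero =>
    intro δ hδ
    exact ⟨0, ⟨fun x _ => rfl, fun x => ⟨0, by simp, by simp⟩⟩, by simpa using hδ⟩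
  | add w₁ w₂ _ _ ih₁ ih₂ =>
    intro δ hδ
    obtain ⟨g₁, hg₁, hb₁⟩ := ih₁ (δ / 5) (by linarith)
    obtain ⟨g₂, hg₂, hb₂⟩ := ih₂ (δ / 5) (by linarith)
    set g : C₀(X, ℂ) := g₁ + g₂ - g₁ * g₂ with hgdef
    have hgood : Good W g := by
      constructor
      · intro x hx
        have h1 := hg₁.1 x hx
        have h2 := hg₂.1 x hx
        simp [hgdef, h1, h2]
      · intro x
        obtain ⟨r₁, hr₁, e₁⟩ := hg₁.2 x
        obtain ⟨r₂, hr₂, e₂⟩ := hg₂.2 x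
        refine ⟨r₁ + r₂ - r₁ * r₂, ?_, ?_⟩
        · constructor
          · nlinarith [hr₁.1, hr₂.1, hr₁.2, hr₂.2]
          · nlinarith [hr₁.1, hr₂.1, hr₁.2, hr₂.2]
        · show (g₁ + g₂ - g₁ * g₂) x = _
          simp only [ZeroAtInftyContinuousMap.sub_apply, ZeroAtInftyContinuousMap.add_apply,
            ZeroAtInftyContinuousMap.mul_apply, e₁, e₂]
          push_cast
          ring
    have hφ2 : ‖φ g₂‖ ≤ 1 := (NonUnitalStarAlgHom.norm_apply_le φ g₂).trans hg₂.norm_le_one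
    have hφ1 : ‖φ g₁‖ ≤ 1 := (NonUnitalStarAlgHom.norm_apply_le φ g₁).trans hg₁.norm_le_one
    have e₁ : φ g w₁ - w₁ = (φ g₁ w₁ - w₁) - φ g₂ (φ g₁ w₁ - w₁) := by
      have : φ (g₁ * g₂) w₁ = φ g₂ (φ g₁ w₁) := by
        rw [mul_comm g₁ g₂, map_mul]; rfl
      simp only [hgdef, map_sub, map_add, ContinuousLinearMap.sub_apply,
        ContinuousLinearMap.add_apply, this, map_sub]
      abel
    have e₂ : φ g w₂ - w₂ = (φ g₂ w₂ - w₂) - φ g₁ (φ g₂ w₂ - w₂) := by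
      have : φ (g₁ * g₂) w₂ = φ g₁ (φ g₂ w₂) := by
        rw [map_mul]; rfl
      simp only [hgdef, map_sub, map_add, ContinuousLinearMap.sub_apply,
        ContinuousLinearMap.add_apply, this, map_sub]
      abel
    refine ⟨g, hgood, ?_⟩
    have hsplit : φ g (w₁ + w₂) - (w₁ + w₂) = (φ g w₁ - w₁) + (φ g w₂ - w₂) := by
      rw [map_add]; abel
    have b₁ : ‖φ g w₁ - w₁‖ ≤ 2 * (δ / 5) := by
      rw [e₁]
      calc ‖(φ g₁ w₁ - w₁) - φ g₂ (φ g₁ w₁ - w₁)‖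
          ≤ ‖φ g₁ w₁ - w₁‖ + ‖φ g₂ (φ g₁ w₁ - w₁)‖ := norm_sub_le _ _
        _ ≤ ‖φ g₁ w₁ - w₁‖ + ‖φ g₂‖ * ‖φ g₁ w₁ - w₁‖ :=
            add_le_add_right ((φ g₂).le_opNorm _) _
        _ ≤ ‖φ g₁ w₁ - w₁‖ + 1 * ‖φ g₁ w₁ - w₁‖ := by
            have := mul_le_mul_of_nonneg_right hφ2 (norm_nonneg (φ g₁ w₁ - w₁))
            linarith
        _ ≤ 2 * (δ / 5) := by rw [one_mul]; linarith
    have b₂ : ‖φ g w₂ - w₂‖ ≤ 2 * (δ / 5) := by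
      rw [e₂]
      calc ‖(φ g₂ w₂ - w₂) - φ g₁ (φ g₂ w₂ - w₂)‖
          ≤ ‖φ g₂ w₂ - w₂‖ + ‖φ g₁ (φ g₂ w₂ - w₂)‖ := norm_sub_le _ _
        _ ≤ ‖φ g₂ w₂ - w₂‖ + ‖φ g₁‖ * ‖φ g₂ w₂ - w₂‖ :=
            add_le_add_right ((φ g₁).le_opNorm _) _
        _ ≤ ‖φ g₂ w₂ - w₂‖ + 1 * ‖φ g₂ w₂ - w₂‖ := by
            have := mul_le_mul_of_nonneg_right hφ1 (norm_nonneg (φ g₂ w₂ - w₂))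
            linarith
        _ ≤ 2 * (δ / 5) := by rw [one_mul]; linarith
    calc ‖φ g (w₁ + w₂) - (w₁ + w₂)‖ ≤ ‖φ g w₁ - w₁‖ + ‖φ g w₂ - w₂‖ := by
          rw [hsplit]; exact norm_add_le _ _
      _ ≤ 2 * (δ / 5) + 2 * (δ / 5) := add_le_add b₁ b₂
      _ < δ := by linarith
  | smul c w hw ih =>
    intro δ hδ
    have hc : (0 : ℝ) < ‖c‖ + 1 := by positivity
    obtain ⟨g, hg, hb⟩ := ih (δ / (‖c‖ + 1)) (div_pos hδ hc)
    refine ⟨g, hg, ?_⟩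
    have : φ g (c • w) - c • w = c • (φ g w - w) := by
      rw [(φ g).map_smul, smul_sub]
    rw [this, norm_smul]
    calc ‖c‖ * ‖φ g w - w‖ ≤ ‖c‖ * (δ / (‖c‖ + 1)) :=
          mul_le_mul_of_nonneg_left hb.le (norm_nonneg c)
      _ < (‖c‖ + 1) * (δ / (‖c‖ + 1)) := by
          have hpos : 0 < δ / (‖c‖ + 1) := div_pos hδ hc
          nlinarith [norm_nonneg c]
      _ = δ := by field_simp

/-- Key approximation: elements of `Hsub φ W` are approximately fixed by `φ` of
suitable elements of `I_W`. -/
lemma Hsub_approx (φ : C₀(X, ℂ) →⋆ₙₐ[ℂ] (H →L[ℂ] H)) {W : Set X} (hW : IsOpen W)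
    {ξ : H} (hξ : ξ ∈ Hsub φ W) :
    ∀ ε > (0 : ℝ), ∃ g : C₀(X, ℂ), Good W g ∧ ‖φ g ξ - ξ‖ < ε := by
  intro ε hε
  obtain ⟨w, hwmem, hwdist⟩ := Metric.mem_closure_iff.mp hξ (ε / 3) (by linarith)
  obtain ⟨g, hg, hb⟩ := span_approx φ hW (SetLike.mem_coe.mp hwmem) (ε / 3) (by linarith)
  refine ⟨g, hg, ?_⟩
  have hφg : ‖φ g‖ ≤ 1 := (NonUnitalStarAlgHom.norm_apply_le φ g).trans hg.norm_le_one
  have hdist : ‖ξ - w‖ < ε / 3 := by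
    rw [← dist_eq_norm]; exact hwdist
  have h1 : ‖φ g (ξ - w)‖ < ε / 3 := by
    calc ‖φ g (ξ - w)‖ ≤ ‖φ g‖ * ‖ξ - w‖ := (φ g).le_opNorm _
      _ ≤ 1 * ‖ξ - w‖ := mul_le_mul_of_nonneg_right hφg (norm_nonneg _)
      _ < ε / 3 := by rw [one_mul]; exact hdist
  have : φ g ξ - ξ = φ g (ξ - w) + (φ g w - w) + (w - ξ) := by
    rw [map_sub]; abel
  rw [this]
  calc ‖φ g (ξ - w) + (φ g w - w) + (w - ξ)‖
      ≤ ‖φ g (ξ - w) + (φ g w - w)‖ + ‖w - ξ‖ := norm_add_le _ _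
    _ ≤ ‖φ g (ξ - w)‖ + ‖φ g w - w‖ + ‖w - ξ‖ := by
        have := norm_add_le (φ g (ξ - w)) (φ g w - w)
        linarith
    _ < ε / 3 + ε / 3 + ε / 3 := by
        have : ‖w - ξ‖ < ε / 3 := by rwa [norm_sub_rev]
        linarith [h1, hb]
    _ = ε := by ring

/-- The identity `H_e ∩ H_f = H_{ef}` from the proof of Proposition 6.2 of the
paper. -/
theorem Hsub_inter (φ : C₀(X, ℂ) →⋆ₙₐ[ℂ] (H →L[ℂ] H)) (U V : Set X)
    (hU : IsOpen U) (hV : IsOpen V) :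
    Hsub φ U ∩ Hsub φ V = Hsub φ (U ∩ V) := by
  apply Set.Subset.antisymm
  · rintro ξ ⟨hξU, hξV⟩
    rw [Hsub]
    rw [Metric.mem_closure_iff]
    intro ε hε
    obtain ⟨g, hg, hbg⟩ := Hsub_approx φ hU hξU (ε / 2) (by linarith)
    obtain ⟨h, hh, hbh⟩ := Hsub_approx φ hV hξV (ε / 2) (by linarith)
    refine ⟨φ (h * g) ξ, ?_, ?_⟩
    · apply Submodule.subset_span
      refine ⟨h * g, ξ, fun x hx => ?_, rfl⟩
      rw [Set.mem_inter_iff] at hx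
      rcases not_and_or.mp hx with hxU | hxV
      · simp [hg.1 x hxU]
      · simp [hh.1 x hxV]
    · have hφh : ‖φ h‖ ≤ 1 := (NonUnitalStarAlgHom.norm_apply_le φ h).trans hh.norm_le_one
      have e : φ (h * g) ξ = φ h (φ g ξ) := by rw [map_mul]; rfl
      rw [dist_eq_norm, e]
      have : ξ - φ h (φ g ξ) = (ξ - φ h ξ) + φ h (ξ - φ g ξ) := by
        rw [map_sub]; abel
      rw [this]
      calc ‖(ξ - φ h ξ) + φ h (ξ - φ g ξ)‖
          ≤ ‖ξ - φ h ξ‖ + ‖φ h (ξ - φ g ξ)‖ := norm_add_le _ _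
        _ ≤ ‖ξ - φ h ξ‖ + ‖φ h‖ * ‖ξ - φ g ξ‖ := add_le_add_right ((φ h).le_opNorm _) _
        _ ≤ ‖ξ - φ h ξ‖ + 1 * ‖ξ - φ g ξ‖ := by
            have := mul_le_mul_of_nonneg_right hφh (norm_nonneg (ξ - φ g ξ))
            linarith
        _ < ε := by
            rw [one_mul]
            have h1 : ‖ξ - φ h ξ‖ < ε / 2 := by rwa [norm_sub_rev]
            have h2 : ‖ξ - φ g ξ‖ < ε / 2 := by rwa [norm_sub_rev]
            linarith
  · have sub : ∀ W₁ W₂ : Set X, W₁ ⊆ W₂ → Hsub φ W₁ ⊆ Hsub φ W₂ := by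
      intro W₁ W₂ hsub
      apply closure_mono
      apply SetLike.coe_subset_coe.mpr
      apply Submodule.span_mono
      rintro v ⟨f, ξ, hf, rfl⟩
      exact ⟨f, ξ, fun x hx => hf x (fun hxW => hx (hsub hxW)), rfl⟩
    exact Set.subset_inter (sub _ _ Set.inter_subset_left) (sub _ _ Set.inter_subset_right)
end
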